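/- Let μ and ν be probability measures on ℝ with all moments finite, and let μ∗ν denote the classical convolution of measures (the pushforward of the product measure μ×ν under addition). Then for every n ≥ 0 the function x ↦ x^n is integrable with respect to μ∗ν and (\hat{μ}⋆\hat{ν})(X^n) = ∫ x^n d(μ∗ν)(x); i.e., the moments of the filtered convolution restricted to powers of X agree with the moments of the classical convolution μ∗ν. -/

import Mathlib

/-!
On powers of `X` the coproduct is `Δ X = X ⊗ 1 + 1 ⊗ X` with commuting summands, so
`(φ ⋆ ψ)(Xⁿ) = ∑ₖ C(n,k) φ(Xᵏ) ψ(Xⁿ⁻ᵏ)`, and `\hat μ (Xᵏ) = μₖ` because `Xᵏ` is a single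
`P`-free block. On the measure side, the `n`-th moment of `μ ∗ ν` is `∫ (x + y)ⁿ d(μ × ν)`,
which the binomial theorem and Fubini expand into the same sum of products of moments.
-/

open scoped TensorProduct

/-- The two-letter alphabet `{z, w}`. -/
inductive Letter | z | w
deriving DecidableEq

/-- Words: elements of the free monoid `S = FS({z,w})`. -/
abbrev Word := List Letter

/-- The three generators `X, X', P` of the algebra `B`. -/
inductive Gen | X | X' | P
deriving DecidableEq, BEq

/-- The free unital associative `ℂ`-algebra on the generators `X, X', P`. -/
abbrev B := FreeAlgebra ℂ Gen

/-- `X(z) = X`, `X(w) = X'`. -/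
noncomputable def Xletter (l : Letter) : B :=
  FreeAlgebra.ι ℂ (match l with | .z => Gen.X | .w => Gen.X')

/-- `X(t) = X(t₁) ⋯ X(t_r)` for a word `t ∈ S`. -/
noncomputable def Xword (t : Word) : B := (t.map Xletter).prod

/-- The projection generator `P`. -/
noncomputable def Pgen : B := FreeAlgebra.ι ℂ Gen.P

/-- Value of the functional `\hat μ` (built from the moment sequence `m`, `m 0 = 1`)
on a basis word of `B`: split the word into maximal `P`-free blocks and take the
product of `m (length of block)`. -/
def wordVal (m : ℕ → ℂ) (l : List Gen) : ℂ :=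
  ((l.splitOn Gen.P).map (fun t => if t = [] then 1 else m t.length)).prod

/-- The linear functional `\hat μ : B → ℂ` associated with a moment sequence `m`. -/
noncomputable def hatL (m : ℕ → ℂ) : B →ₗ[ℂ] ℂ :=
  (Finsupp.linearCombination ℂ (fun x : FreeMonoid Gen => wordVal m (FreeMonoid.toList x))).comp
    ((MonoidAlgebra.coeffLinearEquiv ℂ).toLinearMap.comp
    (FreeAlgebra.equivMonoidAlgebraFreeMonoid : B ≃ₐ[ℂ] MonoidAlgebra ℂ (FreeMonoid Gen)).toLinearMap)

/-- The coproduct `Δ : B → B ⊗ B`, `Δ X = X⊗1 + 1⊗X`, `Δ X' = X'⊗P + P⊗X'`, `Δ P = P⊗P`. -/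
noncomputable def Cop : B →ₐ[ℂ] B ⊗[ℂ] B :=
  FreeAlgebra.lift ℂ (fun g : Gen => match g with
    | .X => FreeAlgebra.ι ℂ Gen.X ⊗ₜ[ℂ] 1 + 1 ⊗ₜ[ℂ] FreeAlgebra.ι ℂ Gen.X
    | .X' => FreeAlgebra.ι ℂ Gen.X' ⊗ₜ[ℂ] Pgen + Pgen ⊗ₜ[ℂ] FreeAlgebra.ι ℂ Gen.X'
    | .P => Pgen ⊗ₜ[ℂ] Pgen)

/-- The functional `φ ⊗ ψ` on `B ⊗ B`. -/
noncomputable def tensorFunc (φ ψ : B →ₗ[ℂ] ℂ) : B ⊗[ℂ] B →ₗ[ℂ] ℂ :=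
  (LinearMap.mul' ℂ ℂ).comp (TensorProduct.map φ ψ)

/-- The filtered convolution `φ ⋆ ψ = (φ ⊗ ψ) ∘ Δ`. -/
noncomputable def filtConv (φ ψ : B →ₗ[ℂ] ℂ) : B →ₗ[ℂ] ℂ :=
  (tensorFunc φ ψ).comp Cop.toLinearMap

/-- The `n`-th moment of a measure on `ℝ`, as a complex number. -/
noncomputable def mom (μ : MeasureTheory.Measure ℝ) (n : ℕ) : ℂ :=
  ((∫ x, x ^ n ∂μ : ℝ) : ℂ)


open MeasureTheory

lemma FreeAlgebra.equivMonoidAlgebraFreeMonoid_ι_pow (g : Gen) (k : ℕ) :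
    FreeAlgebra.equivMonoidAlgebraFreeMonoid (FreeAlgebra.ι ℂ g ^ k)
      = MonoidAlgebra.single (FreeMonoid.of g ^ k) (1 : ℂ) := by
  simp [FreeAlgebra.equivMonoidAlgebraFreeMonoid, MonoidAlgebra.of_apply, MonoidAlgebra.single_pow]

lemma FreeMonoid.toList_of_pow {α : Type*} (a : α) (k : ℕ) :
    FreeMonoid.toList (FreeMonoid.of a ^ k) = List.replicate k a := by
  induction k with
  | zero => rfl
  | succ k ih => rw [pow_succ']; simp [ih, List.replicate_succ]

lemma wordVal_replicate {m : ℕ → ℂ} (hm : m 0 = 1) {g : Gen} (hg : g ≠ Gen.P) (k : ℕ) :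
    wordVal m (List.replicate k g) = m k := by
  have hsplit : (List.replicate k g).splitOn Gen.P = [List.replicate k g] := by
    refine List.splitOnP_eq_singleton fun x hx => ?_
    rw [List.eq_of_mem_replicate hx]
    revert hg
    cases g <;> decide
  rcases k with _ | k <;> simp [wordVal, hsplit, hm]

lemma hatL_ι_pow {m : ℕ → ℂ} (hm : m 0 = 1) {g : Gen} (hg : g ≠ Gen.P) (k : ℕ) :
    hatL m (FreeAlgebra.ι ℂ g ^ k) = m k := by
  simp only [hatL, LinearMap.comp_apply, AlgEquiv.toLinearMap_apply,
    FreeAlgebra.equivMonoidAlgebraFreeMonoid_ι_pow, LinearEquiv.coe_coe,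
    MonoidAlgebra.coeffLinearEquiv_apply, MonoidAlgebra.coeff_single,
    Finsupp.linearCombination_single, one_smul, FreeMonoid.toList_of_pow]
  exact wordVal_replicate hm hg k

lemma mom_zero (μ : Measure ℝ) [IsProbabilityMeasure μ] : mom μ 0 = 1 := by
  simp [mom]

lemma tensorFunc_tmul (φ ψ : B →ₗ[ℂ] ℂ) (x y : B) :
    tensorFunc φ ψ (x ⊗ₜ[ℂ] y) = φ x * ψ y := by
  simp [tensorFunc]

lemma filtConv_ι_X_pow (φ ψ : B →ₗ[ℂ] ℂ) (n : ℕ) :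
    filtConv φ ψ (FreeAlgebra.ι ℂ Gen.X ^ n)
      = ∑ k ∈ Finset.range (n + 1),
          φ (FreeAlgebra.ι ℂ Gen.X ^ k) * ψ (FreeAlgebra.ι ℂ Gen.X ^ (n - k)) * n.choose k := by
  set a : B ⊗[ℂ] B := FreeAlgebra.ι ℂ Gen.X ⊗ₜ[ℂ] 1
  set b : B ⊗[ℂ] B := 1 ⊗ₜ[ℂ] FreeAlgebra.ι ℂ Gen.X
  have hcomm : Commute a b := by
    simp only [a, b, Commute, SemiconjBy, Algebra.TensorProduct.tmul_mul_tmul, one_mul, mul_one]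
  have hCop : Cop (FreeAlgebra.ι ℂ Gen.X ^ n) = (a + b) ^ n := by
    simp [Cop, a, b]
  have hab (k j : ℕ) :
      a ^ k * b ^ j = (FreeAlgebra.ι ℂ Gen.X ^ k) ⊗ₜ[ℂ] (FreeAlgebra.ι ℂ Gen.X ^ j) := by
    simp only [a, b, Algebra.TensorProduct.tmul_pow, one_pow,
      Algebra.TensorProduct.tmul_mul_tmul, one_mul, mul_one]
  rw [filtConv, LinearMap.comp_apply, AlgHom.toLinearMap_apply, hCop, hcomm.add_pow, map_sum]
  refine Finset.sum_congr rfl fun k _ => ?_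
  rw [hab, ← Nat.cast_comm, ← nsmul_eq_mul, map_nsmul, tensorFunc_tmul, nsmul_eq_mul, mul_comm]

namespace MeasureTheory.Measure

variable {μ ν : Measure ℝ}

lemma integrable_pow_add_prod (hμ : ∀ k : ℕ, Integrable (fun x => x ^ k) μ)
    (hν : ∀ k : ℕ, Integrable (fun x => x ^ k) ν) (n : ℕ) :
    Integrable (fun p : ℝ × ℝ => (p.1 + p.2) ^ n) (μ.prod ν) := by
  simp_rw [add_pow]
  exact integrable_finsetSum _ fun k _ => ((hμ k).mul_prod (hν (n - k))).mul_const _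

lemma integrable_pow_conv (hμ : ∀ k : ℕ, Integrable (fun x => x ^ k) μ)
    (hν : ∀ k : ℕ, Integrable (fun x => x ^ k) ν) (n : ℕ) :
    Integrable (fun x => x ^ n) (μ ∗ ν) :=
  (integrable_map_measure (by fun_prop) (by fun_prop)).2 (integrable_pow_add_prod hμ hν n)

lemma integral_pow_conv [SFinite μ] [SFinite ν] (hμ : ∀ k : ℕ, Integrable (fun x => x ^ k) μ)
    (hν : ∀ k : ℕ, Integrable (fun x => x ^ k) ν) (n : ℕ) :
    ∫ x, x ^ n ∂(μ ∗ ν)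
      = ∑ k ∈ Finset.range (n + 1), (∫ x, x ^ k ∂μ) * (∫ y, y ^ (n - k) ∂ν) * n.choose k := by
  calc ∫ x, x ^ n ∂(μ ∗ ν)
      = ∫ p, ∑ k ∈ Finset.range (n + 1), p.1 ^ k * p.2 ^ (n - k) * n.choose k ∂(μ.prod ν) := by
        simp_rw [← add_pow]
        exact integral_map (by fun_prop) (by fun_prop)
    _ = ∑ k ∈ Finset.range (n + 1), ∫ p, p.1 ^ k * p.2 ^ (n - k) * n.choose k ∂(μ.prod ν) :=
        integral_finsetSum _ fun k _ => ((hμ k).mul_prod (hν (n - k))).mul_const _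
    _ = _ := by
        refine Finset.sum_congr rfl fun k _ => ?_
        rw [integral_mul_const, integral_prod_mul (fun x => x ^ k) (fun y => y ^ (n - k))]

end MeasureTheory.Measure

/-- the moments of the filtered convolution restricted to powers of `X`
agree with the moments of the classical convolution `μ ∗ ν`. -/
theorem filtConv_classical (μ ν : MeasureTheory.Measure ℝ)
    [MeasureTheory.IsProbabilityMeasure μ] [MeasureTheory.IsProbabilityMeasure ν]
    (hμ : ∀ n : ℕ, MeasureTheory.Integrable (fun x => x ^ n) μ)
    (hν : ∀ n : ℕ, MeasureTheory.Integrable (fun x => x ^ n) ν)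
    (n : ℕ) :
    MeasureTheory.Integrable (fun x => x ^ n)
        (MeasureTheory.Measure.map (fun p : ℝ × ℝ => p.1 + p.2) (μ.prod ν)) ∧
      filtConv (hatL (mom μ)) (hatL (mom ν)) (FreeAlgebra.ι ℂ Gen.X ^ n) =
        ((∫ x, x ^ n ∂(MeasureTheory.Measure.map (fun p : ℝ × ℝ => p.1 + p.2) (μ.prod ν)) : ℝ) : ℂ) := by
  have hX (ρ : Measure ℝ) [IsProbabilityMeasure ρ] (k : ℕ) :
      hatL (mom ρ) (FreeAlgebra.ι ℂ Gen.X ^ k) = mom ρ k :=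
    hatL_ι_pow (mom_zero ρ) (by decide) k
  refine ⟨Measure.integrable_pow_conv hμ hν n, ?_⟩
  change _ = ((∫ x, x ^ n ∂(μ ∗ ν) : ℝ) : ℂ)
  rw [filtConv_ι_X_pow, Measure.integral_pow_conv hμ hν]
  push_cast [hX, mom]
  rfl
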